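/- Type I winning condition for Blue: let the board contain only empty piles, singletons, and at most one long r-pile and no long b-piles (a type I board). If Blue is the active player with m_b blue chips and Red has n_r red chips with m_b > n_r ≥ 0, then Blue has a winning strategy; in fact the strategy S (capture all own-color piles discarding prisoners when possible, discard all prisoners, then place a blue chip on the longest red pile or an empty pile) wins for Blue. -/

import Mathlib

/-!  A model of the two-player, two-color endgame of *So Long Sucker*.

The two remaining players are Blue and Red, identified with their colors.
A pile is a finite sequence of chips (head = top chip).  A game state
records the board, the number of chips of each color held by each player,
and the active player. -/

/-- The two chip colors (also naming the two remaining players). -/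
inductive Color : Type
  | b : Color
  | r : Color
deriving DecidableEq, Repr

/-- The opponent's color. -/
def Color.other : Color → Color
  | Color.b => Color.r
  | Color.r => Color.b

/-- A pile of chips; the head of the list is the top chip. -/
abbrev Pile := List Color

/-- A game state: the board (a list of piles), the chip counts
`chips p c` = number of `c`-colored chips held by player `p`,
and the active player. -/
structure GState where
  board : List Pile
  chips : Color → Color → ℕ
  active : Color

/-- Total number of chips in player `p`'s possession. -/
def totalChips (s : GState) (p : Color) : ℕ :=
  s.chips p Color.b + s.chips p Color.r

/-- The Next Player Rule in the two-player, two-color endgame, as a function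
of the pile played on (before the placement) and the color of the placed
chip: if the placement triggers a capture, the capturing player moves next;
otherwise the player of the other color than the placed chip moves next
(this is the unique player allowed by the Next Player Rule). -/
def nextActive (π : Pile) (c : Color) : Color :=
  if π.head? = some c then c else c.other

/-- Placement of a chip of color `c` on pile number `i` by the active
player, with the Capture Rule and Next Player Rule applied. -/
inductive PlaceOn (i : ℕ) : GState → GState → Prop
  | noCapture (s : GState) (c : Color)
      (hi : i < s.board.length)
      (hc : 0 < s.chips s.active c)
      (hcap : (s.board.getD i []).head? ≠ some c) :
      PlaceOn i s
        { board := s.board.set i (c :: s.board.getD i []),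
          chips := fun p x =>
            s.chips p x - (if p = s.active ∧ x = c then 1 else 0),
          active := c.other }
  | capture (s : GState) (c : Color) (d : Color)
      (hi : i < s.board.length)
      (hc : 0 < s.chips s.active c)
      (hcap : (s.board.getD i []).head? = some c)
      (hd : d ∈ c :: s.board.getD i []) :
      PlaceOn i s
        { board := s.board.set i [],
          chips := fun p x =>
            (s.chips p x - (if p = s.active ∧ x = c then 1 else 0))
              + (if p = c then
                  (c :: s.board.getD i []).count x - (if d = x then 1 else 0)
                 else 0),
          active := c }

/-- One legal move of the active player: placing a chip on some pile
(resolving captures), discarding a prisoner, or donating a prisoner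
to the opponent. -/
inductive Step : GState → GState → Prop
  | place (i : ℕ) (s s' : GState) (h : PlaceOn i s s') : Step s s'
  | discardPrisoner (s : GState)
      (hc : 0 < s.chips s.active s.active.other) :
      Step s
        { board := s.board,
          chips := fun p x =>
            s.chips p x - (if p = s.active ∧ x = s.active.other then 1 else 0),
          active := s.active }
  | donatePrisoner (s : GState)
      (hc : 0 < s.chips s.active s.active.other) :
      Step s
        { board := s.board,
          chips := fun p x =>
            if x = s.active.other then
              (if p = s.active then s.chips p x - 1 else s.chips p x + 1)
            else s.chips p x,
          active := s.active }

/-- Player `p` has a winning strategy from state `s`: either the opponent is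
to move with no chips (and `p` refuses to donate), so the opponent is
eliminated and `p` wins; or it is `p`'s turn and some move of `p` leads to a
winning position; or it is the opponent's turn and every move of the opponent
leads to a position winning for `p`. -/
inductive WinsFor (p : Color) : GState → Prop
  | elim (s : GState) (h : s.active ≠ p) (h0 : totalChips s s.active = 0) :
      WinsFor p s
  | mine (s s' : GState) (h : s.active = p) (hs : Step s s')
      (hw : WinsFor p s') : WinsFor p s
  | theirs (s : GState) (h : s.active ≠ p) (h0 : 0 < totalChips s s.active)
      (hw : ∀ s', Step s s' → WinsFor p s') : WinsFor p s

/-- The index of the pile on which strategy `S` places its guard: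
the longest pile whose top chip has the opponent's color `q`,
or an empty pile if there is no `q`-pile. -/
def targetIdx (q : Color) (l : List Pile) : ℕ :=
  let opp := l.filter (fun π => π.head? == some q)
  if opp.isEmpty then
    l.findIdx (fun π => π.isEmpty)
  else
    l.findIdx (fun π =>
      (π.head? == some q) &&
        (π.length == (opp.map List.length).foldr Nat.max 0))

/-- The state resulting from the active player `p` playing one full round of
strategy `S`: capture every `p`-pile (discarding an opponent chip from a
captured pile when it contains one, and a `p` chip otherwise), discard all
prisoners, and finally place one guard on the longest opponent-colored pile,
or on an empty pile if there is none.  The turn then passes to the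
opponent. -/
def SRound (s : GState) : GState :=
  let p := s.active
  let q := p.other
  let capt := s.board.filter (fun π => π.head? == some p)
  let b1 := s.board.map (fun π => if π.head? == some p then ([] : Pile) else π)
  let g1 := s.chips p p +
      (capt.map (fun π =>
        if π.contains q then π.count p else π.count p - 1)).sum
  let i := targetIdx q b1
  { board := b1.set i (p :: b1.getD i []),
    chips := fun pl x =>
      if pl = p then (if x = p then g1 - 1 else 0) else s.chips pl x,
    active := q }

/-- Player `p` wins by applying strategy `S` at each of `p`'s rounds,
whatever the opponent plays. -/
inductive WinsWithS (p : Color) : GState → Prop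
  | elim (s : GState) (h : s.active ≠ p) (h0 : totalChips s s.active = 0) :
      WinsWithS p s
  | mine (s : GState) (h : s.active = p) (hg : 0 < s.chips p p)
      (hw : WinsWithS p (SRound s)) : WinsWithS p s
  | theirs (s : GState) (h : s.active ≠ p) (h0 : 0 < totalChips s s.active)
      (hw : ∀ s', Step s s' → WinsWithS p s') : WinsWithS p s

/-- Every pile on the board is an alternating sequence of colors. -/
def Alternating (l : List Pile) : Prop := ∀ π ∈ l, π.Chain' (· ≠ ·)

/-- The long piles (length at least 2) whose top chip has color `c`. -/
def longPiles (c : Color) (l : List Pile) : List Pile :=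
  l.filter (fun π => decide (2 ≤ π.length) && (π.head? == some c))

/-- The sum, over all long `c`-piles, of the number of `c` chips they
contain (e.g. `Σᵢ |ρᵢ|_r` for `c = r`). -/
def longSum (c : Color) (l : List Pile) : ℕ :=
  ((longPiles c l).map (fun π => π.count c)).sum

/-- The maximum, over all long `c`-piles, of the number of `c` chips they
contain (`0` if there is no long `c`-pile). -/
def longMax (c : Color) (l : List Pile) : ℕ :=
  ((longPiles c l).map (fun π => π.count c)).foldr Nat.max 0

/-- The total number of chips in the game (in hands and on the board). -/
def chipCount (s : GState) : ℕ :=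
  totalChips s Color.b + totalChips s Color.r + (s.board.map List.length).sum

/-! Blue keeps the invariant "at most one long red pile and `n_r < m_b`" at the start of each
of its rounds, and "no long red pile and `n_r ≤ m_b`" while Red is to move.  A round of `S`
clears all blue piles and caps the longest red pile, which is the only long one, at the cost of
one blue chip.  While Red moves, `m_b` never decreases, a red chip placed without capture creates
at most one long red pile and hands the turn to Blue, and every Red move either lowers Red's
holdings `n_b + n_r` or is the capture of a red singleton, which keeps the holdings and lowers
the number of red-topped piles.  Induction on these two quantities, lexicographically, ends with
Red to move and empty-handed. -/

lemma Color.other_ne : ∀ c : Color, c.other ≠ c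
  | .b => nofun
  | .r => nofun

lemma List.countP_set_le {α : Type*} (p : α → Bool) (l : List α) (i : ℕ) (a : α) :
    (l.set i a).countP p ≤ l.countP p + if p a then 1 else 0 := by
  rcases lt_or_ge i l.length with hi | hi
  · rw [List.countP_set hi]; omega
  · rw [List.set_eq_of_length_le hi]; omega

lemma List.foldr_max_zero_mem {l : List ℕ} (h : l ≠ []) : l.foldr Nat.max 0 ∈ l :=
  List.maximum_mem (List.foldr_max_of_ne_nil (α := ℕ) h).symm

lemma List.le_foldr_max_zero {l : List ℕ} {a : ℕ} (h : a ∈ l) : a ≤ l.foldr Nat.max 0 :=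
  List.le_max_of_le' 0 h le_rfl

def isLongPile (c : Color) (π : Pile) : Bool := decide (2 ≤ π.length) && (π.head? == some c)

def numTopped (c : Color) (l : List Pile) : ℕ := l.countP (fun π => π.head? == some c)

lemma targetIdx_spec {q : Color} {l : List Pile} (h : ∃ π ∈ l, π.head? = some q) :
    ∃ hi : targetIdx q l < l.length, l[targetIdx q l].head? = some q ∧
      ∀ π ∈ l, π.head? = some q → π.length ≤ l[targetIdx q l].length := by
  let opp := l.filter (fun π => π.head? == some q)
  have mem_opp {π : Pile} : π ∈ opp ↔ π ∈ l ∧ π.head? = some q := by simp [opp]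
  let M := (opp.map List.length).foldr Nat.max 0
  obtain ⟨π₀, hπ₀⟩ := h
  have hne : opp ≠ [] := List.ne_nil_of_mem (mem_opp.2 hπ₀)
  obtain ⟨π₁, hπ₁, hlen₁⟩ : ∃ π₁ ∈ opp, π₁.length = M :=
    List.mem_map.1 (List.foldr_max_zero_mem (by simpa using hne))
  have hidx : targetIdx q l = l.findIdx (fun π => (π.head? == some q) && (π.length == M)) :=
    if_neg (mt List.isEmpty_iff.1 hne)
  have hex : l.findIdx (fun π => (π.head? == some q) && (π.length == M)) < l.length :=
    List.findIdx_lt_length_of_exists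
      ⟨π₁, (mem_opp.1 hπ₁).1, by simp [(mem_opp.1 hπ₁).2, hlen₁]⟩
  have hspec := List.findIdx_getElem (w := hex)
  simp only [Bool.and_eq_true, beq_iff_eq] at hspec
  simp only [hidx]
  refine ⟨hex, hspec.1, fun π hπ hq => ?_⟩
  rw [hspec.2]
  exact List.le_foldr_max_zero (List.mem_map_of_mem (mem_opp.2 ⟨hπ, hq⟩))

lemma length_longPiles (c : Color) (l : List Pile) :
    (longPiles c l).length = l.countP (isLongPile c) :=
  (List.countP_eq_length_filter ..).symm

lemma length_longPiles_set_le (c : Color) (l : List Pile) (i : ℕ) (a : Pile) :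
    (longPiles c (l.set i a)).length ≤ (longPiles c l).length + if isLongPile c a then 1 else 0 := by
  simpa only [length_longPiles] using List.countP_set_le _ l i a

lemma length_longPiles_map_clear {c p : Color} (hcp : c ≠ p) (l : List Pile) :
    (longPiles c (l.map (fun π => if π.head? == some p then ([] : Pile) else π))).length =
      (longPiles c l).length := by
  simp only [length_longPiles, List.countP_map]
  refine List.countP_congr fun π _ => ?_
  by_cases h : π.head? = some p <;> simp [h, isLongPile, hcp.symm]

lemma eq_singleton_of_head?_of_not_isLongPile {c : Color} {π : Pile} (h : π.head? = some c)
    (hπ : isLongPile c π = false) : π = [c] := by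
  match π, h with
  | [_], h => simpa using h
  | _ :: _ :: _, h => simp_all [isLongPile]

lemma numTopped_set_nil_lt {c : Color} {l : List Pile} {i : ℕ} (hi : i < l.length)
    (h : l[i].head? = some c) : numTopped c (l.set i []) < numTopped c l := by
  have := List.boole_getElem_le_countP (p := fun π : Pile => π.head? == some c) hi
  simp only [numTopped, List.countP_set hi, h] at this ⊢
  grind

lemma length_longPiles_set_targetIdx {q : Color} {l : List Pile}
    (hl : (longPiles q l).length ≤ 1) {a : Pile} (ha : isLongPile q a = false) :
    (longPiles q (l.set (targetIdx q l) a)).length = 0 := by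
  by_cases h0 : longPiles q l = []
  · simpa [h0, ha] using length_longPiles_set_le q l (targetIdx q l) a
  obtain ⟨π₀, hπ₀⟩ := List.exists_mem_of_ne_nil _ h0
  obtain ⟨hπ₀l, hπ₀long⟩ := List.mem_filter.1 hπ₀
  simp only [Bool.and_eq_true, decide_eq_true_eq, beq_iff_eq] at hπ₀long
  obtain ⟨hi, htop, hmax⟩ := targetIdx_spec ⟨π₀, hπ₀l, hπ₀long.2⟩
  have hlong : isLongPile q l[targetIdx q l] = true := by
    simpa [isLongPile, htop] using hπ₀long.1.trans (hmax π₀ hπ₀l hπ₀long.2)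
  rw [length_longPiles] at hl ⊢
  simp only [List.countP_set hi, hlong, ha, if_true, Bool.false_eq_true, if_false]
  omega

section SRound

variable {s : GState}

lemma SRound_chips_other (x : Color) : (SRound s).chips s.active.other x = s.chips s.active.other x := by
  simp [SRound, s.active.other_ne]

lemma SRound_chips_self : s.chips s.active s.active - 1 ≤ (SRound s).chips s.active s.active := by
  simp only [SRound, if_true]
  omega

lemma SRound_longPiles_other (h : (longPiles s.active.other s.board).length ≤ 1) :
    (longPiles s.active.other (SRound s).board).length = 0 := by
  refine length_longPiles_set_targetIdx ?_ ?_
  · rwa [length_longPiles_map_clear s.active.other_ne]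
  · simp [isLongPile, s.active.other_ne.symm]

end SRound

structure BlueInv (s : GState) : Prop where
  active : s.active = .b
  longRed : (longPiles .r s.board).length ≤ 1
  chips_lt : s.chips .r .r < s.chips .b .b

structure RedInv (s : GState) : Prop where
  active : s.active = .r
  longRed : (longPiles .r s.board).length = 0
  chips_le : s.chips .r .r ≤ s.chips .b .b

lemma BlueInv.redInv_SRound {s : GState} (h : BlueInv s) : RedInv (SRound s) := by
  obtain ⟨bd, ch, ac⟩ := s
  obtain ⟨rfl, hl, hlt⟩ := h
  have hr := SRound_chips_other (s := ⟨bd, ch, .b⟩) .r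
  have hb := SRound_chips_self (s := ⟨bd, ch, .b⟩)
  exact ⟨rfl, SRound_longPiles_other (s := ⟨bd, ch, .b⟩) hl, by dsimp only [Color.other] at *; omega⟩

lemma BlueInv.chips_pos {s : GState} (h : BlueInv s) : 0 < s.chips .b .b :=
  Nat.zero_lt_of_lt h.chips_lt

lemma BlueInv.totalChips_SRound {s : GState} (h : BlueInv s) :
    totalChips (SRound s) .r = totalChips s .r := by
  have := SRound_chips_other (s := s)
  simp only [h.active, Color.other] at this
  simp [totalChips, this]

def RedProgress (s s' : GState) : Prop :=
  ((BlueInv s' ∨ RedInv s') ∧ totalChips s' .r < totalChips s .r) ∨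
    (RedInv s' ∧ totalChips s' .r = totalChips s .r ∧ numTopped .r s'.board < numTopped .r s.board)

section RedMoves

variable {bd : List Pile} {ch : Color → Color → ℕ}

lemma redProgress_noCapture (hl : (longPiles .r bd).length = 0) (hle : ch .r .r ≤ ch .b .b)
    {i : ℕ} {c : Color} (hc : 0 < ch .r c) :
    RedProgress ⟨bd, ch, .r⟩
      ⟨bd.set i (c :: bd.getD i []), fun p x => ch p x - if p = .r ∧ x = c then 1 else 0,
        c.other⟩ := by
  left
  cases c with
  | r =>
    refine ⟨.inl ⟨rfl, ?_, ?_⟩, ?_⟩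
    · have := length_longPiles_set_le .r bd i (.r :: bd.getD i [])
      grind
    · grind
    · grind [totalChips]
  | b =>
    refine ⟨.inr ⟨rfl, ?_, ?_⟩, ?_⟩
    · simpa [hl, isLongPile] using length_longPiles_set_le .r bd i (.b :: bd.getD i [])
    · simpa using hle
    · grind [totalChips]

lemma redProgress_capture (hl : (longPiles .r bd).length = 0) (hle : ch .r .r ≤ ch .b .b)
    {i : ℕ} {c d : Color} (hi : i < bd.length) (hc : 0 < ch .r c) (hcap : bd[i].head? = some c)
    (hd : d ∈ c :: bd[i]) :
    RedProgress ⟨bd, ch, .r⟩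
      ⟨bd.set i [], fun p x => (ch p x - if p = .r ∧ x = c then 1 else 0) +
        if p = c then (c :: bd[i]).count x - (if d = x then 1 else 0) else 0, c⟩ := by
  cases c with
  | r =>
    right
    have hnl : isLongPile .r bd[i] = false := by
      rw [length_longPiles, List.countP_eq_zero] at hl
      simpa using hl _ (List.getElem_mem hi)
    have hπ := eq_singleton_of_head?_of_not_isLongPile hcap hnl
    obtain rfl : d = .r := by simpa [hπ] using hd
    refine ⟨⟨rfl, ?_, ?_⟩, ?_, numTopped_set_nil_lt hi hcap⟩
    · simpa [hl, isLongPile] using length_longPiles_set_le .r bd i []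
    · grind
    · grind [totalChips]
  | b =>
    left
    have hcount : 0 < bd[i].count .b := List.count_pos_iff.2 (List.mem_of_mem_head? hcap)
    refine ⟨.inl ⟨rfl, ?_, ?_⟩, ?_⟩
    · exact (length_longPiles_set_le .r bd i []).trans (by simp [hl, isLongPile])
    · grind
    · grind [totalChips]

end RedMoves

lemma RedInv.step {s s' : GState} (hs : RedInv s) (h : Step s s') : RedProgress s s' := by
  obtain ⟨bd, ch, ac⟩ := s
  obtain ⟨rfl, hl, hle⟩ := hs
  dsimp only at hl hle
  cases h with
  | place i _ _ h =>
    cases h with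
    | noCapture c _ hc _ => exact redProgress_noCapture hl hle hc
    | capture c d hi hc hcap hd =>
      have hgd : bd.getD i [] = bd[i] := List.getD_eq_getElem bd [] hi
      dsimp only at hcap hd ⊢
      rw [hgd] at hcap hd ⊢
      exact redProgress_capture hl hle hi hc hcap hd
  | discardPrisoner _ hc | donatePrisoner _ hc =>
    left
    refine ⟨.inr ⟨rfl, hl, ?_⟩, ?_⟩ <;> grind [totalChips, Color.other]

theorem winsWithS_blue_of_redInv (s : GState) (hs : RedInv s) : WinsWithS .b s := by
  rcases Nat.eq_zero_or_pos (totalChips s s.active) with h0 | h0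
  · exact .elim s (by simp [hs.active]) h0
  refine .theirs s (by simp [hs.active]) h0 fun s' hstep => ?_
  rcases hs.step hstep with ⟨hb | hr, hlt⟩ | ⟨hr, heq, hlt⟩
  · have hround := hb.totalChips_SRound
    exact .mine s' hb.active hb.chips_pos (winsWithS_blue_of_redInv (SRound s') hb.redInv_SRound)
  · exact winsWithS_blue_of_redInv s' hr
  · exact winsWithS_blue_of_redInv s' hr
termination_by (totalChips s .r, numTopped .r s.board)
decreasing_by
  all_goals simp only [Prod.lex_def]; omega

theorem typeI_blue_wins_general (s : GState)
    (hactive : s.active = Color.b)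
    (hI₂ : (longPiles Color.r s.board).length ≤ 1)
    (h : s.chips Color.r Color.r < s.chips Color.b Color.b) :
    WinsWithS Color.b s :=
  have hs : BlueInv s := ⟨hactive, hI₂, h⟩
  .mine s hactive hs.chips_pos (winsWithS_blue_of_redInv _ hs.redInv_SRound)

/-- **Type I winning condition for Blue.**  Let the board be of type I (all
piles alternating, no long `b`-piles, at most one long `r`-pile), let Blue be
the active player with `m_b` blue chips, and let Red hold `n_r` red chips.
If `m_b > n_r ≥ 0` when Blue's turn starts, then Blue wins by applying
strategy `S` at every round. -/
theorem typeI_blue_wins (s : GState)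
    (halt : Alternating s.board)
    (hroom : chipCount s ≤ s.board.length)
    (hactive : s.active = Color.b)
    (hI₁ : longPiles Color.b s.board = [])
    (hI₂ : (longPiles Color.r s.board).length ≤ 1)
    (h : s.chips Color.r Color.r < s.chips Color.b Color.b) :
    WinsWithS Color.b s :=
  typeI_blue_wins_general s hactive hI₂ h
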